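/- arXiv:2510.11866 — 3 statements merged into one kernel-verified Lean document; each statement's English description precedes it below -/
import Mathlib

section
/- In the off-chain audit game with N ≥ 3 storage providers and parameters satisfying R_a > 0, c_a > 0, c_s > 0, R_s ≥ 0, the fully dishonest profile (every SP i plays σ^d_i, i.e. s_i = 0, a_i^j = 0 and r_i^j = 1 for all j ≠ i) is a pure Nash equilibrium, and it is the unique pure Nash equilibrium of the game. -/
/-!
Off-chain audit game: `N ≥ 3` storage providers. A pure strategy of SP `i` consists of a
storage bit `s`, an audit bit `a j` for each other SP `j`, and a report bit `r j` for each
other SP `j` (`true` = ✓). Utility: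
`u_i(σ) = R_s·1[|{j ≠ i : r_j^i = 1}| > N/2] + R_a·Σ_{j≠i} r_i^j − c_s·s_i − c_a·Σ_{j≠i} a_i^j`.
-/

open Finset

/-- A pure strategy of storage provider `i` in the off-chain audit game. -/
structure OffStrat (N : ℕ) (i : Fin N) where
  /-- whether `i` stores its assigned data -/
  s : Bool
  /-- whether `i` audits SP `j` -/
  a : {j : Fin N // j ≠ i} → Bool
  /-- `i`'s report about SP `j` (`true` = ✓, compliant) -/
  r : {j : Fin N // j ≠ i} → Bool

/-- Numerical value of a Boolean choice. -/
def b01 (b : Bool) : ℝ := if b then 1 else 0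

/-- Number of SPs `j ≠ i` reporting ✓ about `i`. -/
def offTrueReports {N : ℕ} (σ : ∀ i : Fin N, OffStrat N i) (i : Fin N) : ℕ :=
  (univ.filter fun j : {j : Fin N // j ≠ i} => (σ j.1).r ⟨i, Ne.symm j.2⟩ = true).card

/-- Utility of SP `i` in the off-chain audit game. -/
noncomputable def offU {N : ℕ} (Rs Ra cs ca : ℝ) (σ : ∀ i : Fin N, OffStrat N i)
    (i : Fin N) : ℝ :=
  Rs * (if (N : ℝ) / 2 < (offTrueReports σ i : ℝ) then 1 else 0)
    + Ra * ∑ j : {j : Fin N // j ≠ i}, b01 ((σ i).r j)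
    - cs * b01 (σ i).s
    - ca * ∑ j : {j : Fin N // j ≠ i}, b01 ((σ i).a j)

/-- Pure Nash equilibrium of the off-chain audit game: no SP can strictly increase its own
utility by unilaterally changing its strategy. -/
def OffNash {N : ℕ} (Rs Ra cs ca : ℝ) (σ : ∀ i : Fin N, OffStrat N i) : Prop :=
  ∀ (i : Fin N) (τ : OffStrat N i),
    offU Rs Ra cs ca (Function.update σ i τ) i ≤ offU Rs Ra cs ca σ i

/-- The fully dishonest strategy profile: don't store, don't audit, report ✓ on everyone. -/
def offDishonest (N : ℕ) : ∀ i : Fin N, OffStrat N i :=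
  fun _ => ⟨false, fun _ => false, fun _ => true⟩

/-- With `N ≥ 3`, `R_a > 0`, `c_a > 0`, `c_s > 0`, `R_s ≥ 0`, the fully
dishonest profile is a pure Nash equilibrium of the off-chain audit game, and it is the
unique pure Nash equilibrium. -/
theorem offchain_full_dishonesty_unique_nash
    (N : ℕ) (hN : 3 ≤ N) (Rs Ra cs ca : ℝ)
    (hRa : 0 < Ra) (hca : 0 < ca) (hcs : 0 < cs) (hRs : 0 ≤ Rs) :
    OffNash Rs Ra cs ca (offDishonest N) ∧
      ∀ σ : ∀ i : Fin N, OffStrat N i, OffNash Rs Ra cs ca σ → σ = offDishonest N := by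
  have hrep : ∀ (σ : ∀ i : Fin N, OffStrat N i) (i : Fin N) (τ : OffStrat N i),
      offTrueReports (Function.update σ i τ) i = offTrueReports σ i := by
    intro σ i τ
    unfold offTrueReports
    congr 1
    apply Finset.filter_congr
    intro j _
    rw [Function.update_of_ne j.2]
  have hupd : ∀ (σ : ∀ i : Fin N, OffStrat N i) (i : Fin N) (τ : OffStrat N i),
      offU Rs Ra cs ca (Function.update σ i τ) i =
        Rs * (if (N : ℝ) / 2 < (offTrueReports σ i : ℝ) then 1 else 0)
          + Ra * ∑ j : {j : Fin N // j ≠ i}, b01 (τ.r j)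
          - cs * b01 τ.s
          - ca * ∑ j : {j : Fin N // j ≠ i}, b01 (τ.a j) := by
    intro σ i τ
    unfold offU
    rw [hrep, Function.update_self]
  have hb01_nonneg : ∀ b, 0 ≤ b01 b := by
    intro b; unfold b01; split <;> norm_num
  have hb01_le : ∀ b, b01 b ≤ 1 := by
    intro b; unfold b01; split <;> norm_num
  -- value of the "controllable" part, bounded by the dishonest value
  have key : ∀ (i : Fin N) (τ : OffStrat N i),
      Ra * ∑ j : {j : Fin N // j ≠ i}, b01 (τ.r j) - cs * b01 τ.s
        - ca * ∑ j : {j : Fin N // j ≠ i}, b01 (τ.a j)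
      ≤ Ra * ((Finset.univ : Finset {j : Fin N // j ≠ i}).card : ℝ) := by
    intro i τ
    have h1 : ∑ j : {j : Fin N // j ≠ i}, b01 (τ.r j) ≤ ((Finset.univ : Finset {j : Fin N // j ≠ i}).card : ℝ) := by
      calc ∑ j : {j : Fin N // j ≠ i}, b01 (τ.r j)
          ≤ ∑ _j : {j : Fin N // j ≠ i}, (1 : ℝ) :=
            Finset.sum_le_sum fun j _ => hb01_le _
        _ = ((Finset.univ : Finset {j : Fin N // j ≠ i}).card : ℝ) := by simp
    have h2 : 0 ≤ cs * b01 τ.s := mul_nonneg hcs.le (hb01_nonneg _)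
    have h3 : 0 ≤ ca * ∑ j : {j : Fin N // j ≠ i}, b01 (τ.a j) :=
      mul_nonneg hca.le (Finset.sum_nonneg fun j _ => hb01_nonneg _)
    nlinarith [mul_le_mul_of_nonneg_left h1 hRa.le]
  have hdisU : ∀ i : Fin N,
      offU Rs Ra cs ca (offDishonest N) i =
        Rs * (if (N : ℝ) / 2 < (offTrueReports (offDishonest N) i : ℝ) then 1 else 0)
          + Ra * ((Finset.univ : Finset {j : Fin N // j ≠ i}).card : ℝ) := by
    intro i
    unfold offU offDishonest b01
    simp
  constructor
  · intro i τ
    rw [hupd, hdisU]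
    have := key i τ
    linarith
  · intro σ hσ
    funext i
    have h := hσ i ⟨false, fun _ => false, fun _ => true⟩
    rw [hupd] at h
    unfold offU at h
    simp only [show b01 true = 1 from rfl, show b01 false = 0 from rfl, Finset.sum_const,
      nsmul_eq_mul, mul_one, mul_zero, sub_zero] at h
    have hmain : Ra * ((Finset.univ : Finset {j : Fin N // j ≠ i}).card : ℝ)
        ≤ Ra * ∑ j : {j : Fin N // j ≠ i}, b01 ((σ i).r j) - cs * b01 ((σ i).s)
          - ca * ∑ j : {j : Fin N // j ≠ i}, b01 ((σ i).a j) := by linarith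
    have h1 : ∑ j : {j : Fin N // j ≠ i}, b01 ((σ i).r j)
        ≤ ((Finset.univ : Finset {j : Fin N // j ≠ i}).card : ℝ) := by
      calc ∑ j : {j : Fin N // j ≠ i}, b01 ((σ i).r j)
          ≤ ∑ _j : {j : Fin N // j ≠ i}, (1 : ℝ) :=
            Finset.sum_le_sum fun j _ => hb01_le _
        _ = _ := by simp
    have h2 : 0 ≤ cs * b01 (σ i).s := mul_nonneg hcs.le (hb01_nonneg _)
    have h3 : 0 ≤ ca * ∑ j : {j : Fin N // j ≠ i}, b01 ((σ i).a j) :=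
      mul_nonneg hca.le (Finset.sum_nonneg fun j _ => hb01_nonneg _)
    have hr : ∀ j : {j : Fin N // j ≠ i}, (σ i).r j = true := by
      by_contra hc
      push_neg at hc
      obtain ⟨j0, hj0⟩ := hc
      have hb0 : b01 ((σ i).r j0) = 0 := by unfold b01; simp [hj0]
      have h1' : ∑ j : {j : Fin N // j ≠ i}, b01 ((σ i).r j)
          ≤ ((Finset.univ : Finset {j : Fin N // j ≠ i}).card : ℝ) - 1 := by
        have hsplit : ∑ j : {j : Fin N // j ≠ i}, b01 ((σ i).r j)
            = b01 ((σ i).r j0) + ∑ j ∈ Finset.univ.erase j0, b01 ((σ i).r j) := by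
          rw [← Finset.add_sum_erase _ _ (Finset.mem_univ j0)]
        have hle : ∑ j ∈ Finset.univ.erase j0, b01 ((σ i).r j)
            ≤ ((Finset.univ.erase j0).card : ℝ) := by
          calc ∑ j ∈ Finset.univ.erase j0, b01 ((σ i).r j)
              ≤ ∑ _j ∈ Finset.univ.erase j0, (1:ℝ) :=
                Finset.sum_le_sum fun j _ => hb01_le _
            _ = _ := by simp
        have hcard : ((Finset.univ.erase j0).card : ℝ)
            = ((Finset.univ : Finset {j : Fin N // j ≠ i}).card : ℝ) - 1 := by
          rw [Finset.card_erase_of_mem (Finset.mem_univ j0)]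
          have hpos : 1 ≤ (Finset.univ : Finset {j : Fin N // j ≠ i}).card :=
            Finset.card_pos.mpr ⟨j0, Finset.mem_univ j0⟩
          push_cast [Nat.cast_sub hpos]
          ring
        rw [hsplit, hb0]
        linarith
      nlinarith [mul_le_mul_of_nonneg_left h1' hRa.le]
    have hs : (σ i).s = false := by
      cases hsb : (σ i).s
      · rfl
      · exfalso
        have hb1 : b01 ((σ i).s) = 1 := by rw [hsb]; rfl
        nlinarith [mul_le_mul_of_nonneg_left h1 hRa.le]
    have ha : ∀ j : {j : Fin N // j ≠ i}, (σ i).a j = false := by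
      intro j0
      cases hab : (σ i).a j0
      · rfl
      · exfalso
        have hb1 : b01 ((σ i).a j0) = 1 := by rw [hab]; rfl
        have h3' : 1 ≤ ∑ j : {j : Fin N // j ≠ i}, b01 ((σ i).a j) := by
          calc (1:ℝ) = b01 ((σ i).a j0) := hb1.symm
            _ ≤ _ := Finset.single_le_sum (fun j _ => hb01_nonneg _) (Finset.mem_univ j0)
        nlinarith [mul_le_mul_of_nonneg_left h1 hRa.le]
    show σ i = offDishonest N i
    have : σ i = ⟨(σ i).s, (σ i).a, (σ i).r⟩ := rfl
    rw [this, hs, funext ha, funext hr]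
    rfl
end

section
/- In the on-chain-verified audit game, fix an ordered pair (i,j) with s_j = 1, and assume (i) S_a > ((1 − p_a)/p_a)·R_a + c_a/(ε·p_a) and (ii) R_a > c_a/(1 − ε). Then the honest pair strategy (a_i^j = 1 with the identity reporting policy) yields expected audit payoff (1 − ε)·R_a − c_a, which is strictly greater than the expected audit payoff of every other pair strategy (a, ρ) ∈ {0,1} × ({0,1} → {0,1}) whose induced pair payoff differs, and in particular strictly greater than the payoffs of (a = 0, ρ constantly ✓), (a = 0, ρ constantly ✗), and (a = 1, ρ constantly ✗). -/
/-- Expected audit payoff of the auditor from one ordered pair, where `sj` is the auditee's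
storage bit, `a` the auditor's audit bit, and `ρ` the auditor's reporting policy. The
backing probability is `β = 1 − ε` if the auditee stores and `0` otherwise; an unbacked
✓ report earns `(1 − p_a)·R_a − p_a·S_a` in expectation. -/
noncomputable def pairPayoff (Ra ca Sa pa ε : ℝ) (sj a : Bool) (ρ : Bool → Bool) : ℝ :=
  let β : ℝ := if sj then 1 - ε else 0
  let F : ℝ := (1 - pa) * Ra - pa * Sa
  if a then β * b01 (ρ true) * Ra + (1 - β) * b01 (ρ false) * F - ca
  else b01 (ρ false) * (β * Ra + (1 - β) * F)

/-- Against a storing auditee (`s_j = 1`), under conditions (i)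
`S_a > ((1 − p_a)/p_a)·R_a + c_a/(ε·p_a)` and (ii) `R_a > c_a/(1 − ε)`, the honest pair
strategy (audit, identity reporting policy) yields expected payoff `(1 − ε)·R_a − c_a`,
which strictly exceeds the payoff of every other pair strategy whose induced payoff differs;
in particular it strictly exceeds the payoffs of (no audit, always ✓), (no audit, always ✗),
and (audit, always ✗). -/
theorem honest_pair_strategy_optimal_storing
    (Ra ca Sa pa ε : ℝ)
    (hRa : 0 < Ra) (hca : 0 < ca) (hSa : 0 ≤ Sa)
    (hpa0 : 0 < pa) (hpa1 : pa ≤ 1) (hε0 : 0 < ε) (hε1 : ε < 1)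
    (h1 : ((1 - pa) / pa) * Ra + ca / (ε * pa) < Sa)
    (h2 : ca / (1 - ε) < Ra) :
    pairPayoff Ra ca Sa pa ε true true (fun b => b) = (1 - ε) * Ra - ca ∧
    (∀ (a : Bool) (ρ : Bool → Bool),
        pairPayoff Ra ca Sa pa ε true a ρ ≠ (1 - ε) * Ra - ca →
        pairPayoff Ra ca Sa pa ε true a ρ < (1 - ε) * Ra - ca) ∧
    pairPayoff Ra ca Sa pa ε true false (fun _ => true) < (1 - ε) * Ra - ca ∧
    pairPayoff Ra ca Sa pa ε true false (fun _ => false) < (1 - ε) * Ra - ca ∧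
    pairPayoff Ra ca Sa pa ε true true (fun _ => false) < (1 - ε) * Ra - ca := by
  have hFkey : ε * ((1 - pa) * Ra - pa * Sa) < -ca := by
    have h1' : ((1 - pa) / pa) * Ra * (ε * pa) + (ca / (ε * pa)) * (ε * pa) < Sa * (ε * pa) := by
      have hεp : 0 < ε * pa := mul_pos hε0 hpa0
      nlinarith [mul_lt_mul_of_pos_right h1 hεp]
    have hεp : ε * pa ≠ 0 := by positivity
    have e1 : ((1 - pa) / pa) * Ra * (ε * pa) = ε * ((1 - pa) * Ra) := by
      field_simp
    have e2 : (ca / (ε * pa)) * (ε * pa) = ca := by field_simp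
    rw [e1, e2] at h1'
    nlinarith
  have hF0 : (1 - pa) * Ra - pa * Sa < 0 := by nlinarith
  have hca' : ca < (1 - ε) * Ra := by
    have := mul_lt_mul_of_pos_right h2 (by linarith : (0:ℝ) < 1 - ε)
    have e : ca / (1 - ε) * (1 - ε) = ca := div_mul_cancel₀ ca (by linarith)
    rw [e] at this; linarith
  refine ⟨?_, ?_, ?_, ?_, ?_⟩
  · simp [pairPayoff, b01]
  · intro a ρ hne
    rcases a with _ | _ <;> rcases hT : ρ true with _ | _ <;> rcases hF : ρ false with _ | _ <;>
      simp [pairPayoff, b01, hT, hF] at hne ⊢ <;> nlinarith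
  · simp [pairPayoff, b01]; nlinarith
  · simp [pairPayoff, b01]; nlinarith
  · simp [pairPayoff, b01]; nlinarith
end

section
/- In the on-chain-verified audit game, fix an ordered pair (i,j) with s_j = 0, and assume p_a ∈ (0,1], c_a > 0, and S_a ≥ ((1 − p_a)/p_a)·R_a. Then the pair strategy (a = 0, ρ constantly ✗) attains the maximum expected audit payoff over all pair strategies, and that maximum value is 0. -/
/-- Against a non-storing auditee (`s_j = 0`), with `p_a ∈ (0,1]`,
`c_a > 0` and `S_a ≥ ((1 − p_a)/p_a)·R_a`, the pair strategy (no audit, always ✗) attains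
the maximum expected audit payoff over all pair strategies, and that maximum value is `0`. -/
theorem lazy_negative_optimal_nonstoring
    (Ra ca Sa pa ε : ℝ)
    (hRa : 0 < Ra) (hca : 0 < ca) (hSa : 0 ≤ Sa)
    (hpa0 : 0 < pa) (hpa1 : pa ≤ 1) (hε0 : 0 < ε) (hε1 : ε < 1)
    (hS : ((1 - pa) / pa) * Ra ≤ Sa) :
    pairPayoff Ra ca Sa pa ε false false (fun _ => false) = 0 ∧
    ∀ (a : Bool) (ρ : Bool → Bool), pairPayoff Ra ca Sa pa ε false a ρ ≤ 0 := by
  have hF : (1 - pa) * Ra - pa * Sa ≤ 0 := by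
    have h := mul_le_mul_of_nonneg_left hS (le_of_lt hpa0)
    rw [show pa * ((1 - pa) / pa * Ra) = (1-pa)*Ra*(pa/pa) by ring,
        div_self (ne_of_gt hpa0), mul_one] at h
    linarith
  constructor
  · simp [pairPayoff, b01]
  · intro a ρ
    have hb : (0:ℝ) ≤ b01 (ρ false) ∧ b01 (ρ false) ≤ 1 := by
      unfold b01; split <;> norm_num
    cases a <;> simp [pairPayoff, b01] <;> cases hρ : ρ false <;>
      simp [hρ] <;> nlinarith
end
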